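/- In any group operad 𝒢, for all p, q, k ∈ ℕ the map G k → G (p + k + q) sending x to γ(e₃; e_p, x, e_q) is an injective group homomorphism (here e₃, e_p, e_q are the group units of G 3, G p, G q). -/

import Mathlib

/-- Splitting a sigma type over `Option`. -/
def sigmaOptionEquiv {γ : Type*} (β : Option γ → Type*) :
    (Σ o : Option γ, β o) ≃ (β none ⊕ Σ c : γ, β (some c)) where
  toFun := fun x => match x with
    | ⟨none, b⟩ => .inl b
    | ⟨some c, b⟩ => .inr ⟨c, b⟩
  invFun := fun x => match x with
    | .inl b => ⟨none, b⟩
    | .inr ⟨c, b⟩ => ⟨some c, b⟩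
  left_inv := fun ⟨o, b⟩ => by cases o <;> rfl
  right_inv := fun x => by rcases x with b | ⟨c, b⟩ <;> rfl

/-- The order-preserving flattening equivalence
`(Σ i : Fin n, Fin (k i)) ≃ Fin (∑ i, k i)`, listing the blocks in
increasing order of the index. -/
def finSigmaFinEquivFlat : {n : ℕ} → {k : Fin n → ℕ} → (Σ i : Fin n, Fin (k i)) ≃ Fin (∑ i, k i)
  | 0, k => ((Equiv.equivOfIsEmpty (Σ i : Fin 0, Fin (k i)) (Fin 0)).trans
      (finCongr (show 0 = ∑ i : Fin 0, k i by simp)))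
  | (n+1), k =>
    ((Equiv.sigmaCongrLeft (β := fun i => Fin (k i)) (finSuccEquiv n).symm).symm.trans
      ((sigmaOptionEquiv fun o => Fin (k ((finSuccEquiv n).symm o))).trans
        ((Equiv.sumCongr (finCongr (congrArg k (finSuccEquiv_symm_none)))
            ((Equiv.sigmaCongrRight fun c =>
                finCongr (congrArg k (finSuccEquiv_symm_some c))).trans
              finSigmaFinEquivFlat)).trans
          (finSumFinEquiv.trans (finCongr (Fin.sum_univ_succ k).symm)))))

/-- Block-permutation composition in the operad of symmetric groups. -/
def blockComp {n : ℕ} (k : Fin n → ℕ) (σ : Equiv.Perm (Fin n))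
    (σs : ∀ i, Equiv.Perm (Fin (k i))) : Equiv.Perm (Fin (∑ i, k i)) :=
  finSigmaFinEquivFlat.symm.trans <|
    (Equiv.sigmaCongr σ fun i =>
        (σs i).trans (finCongr (congrArg k (σ.symm_apply_apply i).symm))).trans <|
      finSigmaFinEquivFlat.trans (finCongr (Equiv.sum_comp σ.symm k))

theorem flatten_sum_eq {n : ℕ} (k : Fin n → ℕ) (l : ∀ i : Fin n, Fin (k i) → ℕ) :
    (∑ j : Fin (∑ i, k i), l (finSigmaFinEquivFlat.symm j).1 (finSigmaFinEquivFlat.symm j).2)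
      = ∑ i, ∑ s, l i s := by
  rw [Fintype.sum_equiv finSigmaFinEquivFlat.symm _ (fun a => l a.1 a.2) (fun _ => rfl)]
  rw [← Finset.univ_sigma_univ, Finset.sum_sigma]

/-- Transport an element of `G m` along an equality `m = n` of levels. -/
def gcast (G : ℕ → Type) {m n : ℕ} (h : m = n) (x : G m) : G n := h ▸ x

/-- A group operad: a planar operad `G` with a group structure on each level,
a map of operads `π` to the operad of symmetric groups which is a levelwise
group homomorphism, subject to the interchange law. -/
structure GroupOperad (G : ℕ → Type) [∀ n, Group (G n)] where
  /-- operadic composition -/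
  γ : ∀ {n : ℕ} {k : Fin n → ℕ}, G n → (∀ i, G (k i)) → G (∑ i, k i)
  /-- the operad identity -/
  e : G 1
  /-- the levelwise group homomorphisms to the symmetric groups -/
  π : ∀ {n : ℕ}, G n →* Equiv.Perm (Fin n)
  π_e : π e = 1
  γ_id : ∀ {n : ℕ} (x : G n),
    gcast G (show (∑ _i : Fin 1, n) = n by simp)
      (γ (k := fun _ : Fin 1 => n) e fun _ => x) = x
  id_γ : ∀ {n : ℕ} (x : G n),
    gcast G (show (∑ _i : Fin n, 1) = n by simp)
      (γ (k := fun _ : Fin n => 1) x fun _ => e) = x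
  γ_assoc : ∀ {n : ℕ} {k : Fin n → ℕ} {l : ∀ i : Fin n, Fin (k i) → ℕ}
      (x : G n) (xs : ∀ i, G (k i)) (ys : ∀ i s, G (l i s)),
    gcast G (flatten_sum_eq k l)
        (γ (k := fun j => l (finSigmaFinEquivFlat.symm j).1 (finSigmaFinEquivFlat.symm j).2)
          (γ x xs) fun j => ys (finSigmaFinEquivFlat.symm j).1 (finSigmaFinEquivFlat.symm j).2)
      = γ x fun i => γ (xs i) (ys i)
  π_γ : ∀ {n : ℕ} {k : Fin n → ℕ} (x : G n) (xs : ∀ i, G (k i)),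
    π (γ x xs) = blockComp k (π x) fun i => π (xs i)
  interchange : ∀ {n : ℕ} {k : Fin n → ℕ} (x y : G n) (xs ys : ∀ i, G (k i)),
    γ (x * y) (fun i => xs i * ys i)
      = gcast G (Equiv.sum_comp (π y).symm k)
          (γ (k := fun j => k ((π y).symm j)) x fun j => xs ((π y).symm j))
        * γ y ys

/-- A vector of three natural numbers, as a function on `Fin 3`. -/
def v3 (p q r : ℕ) : Fin 3 → ℕ
  | ⟨0, _⟩ => p
  | ⟨1, _⟩ => q
  | ⟨2, _⟩ => r

/-- A triple of elements of the graded family `G`, indexed over `v3 p q r`. -/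
def f3 {G : ℕ → Type} {p q r : ℕ} (a : G p) (b : G q) (c : G r) :
    ∀ i : Fin 3, G (v3 p q r i)
  | ⟨0, _⟩ => a
  | ⟨1, _⟩ => b
  | ⟨2, _⟩ => c

theorem sum_v3 (p q r : ℕ) : (∑ i, v3 p q r i) = p + q + r := by
  rw [Fin.sum_univ_three]; rfl

/-- A vector of two natural numbers, as a function on `Fin 2`. -/
def v2 (p q : ℕ) : Fin 2 → ℕ
  | ⟨0, _⟩ => p
  | ⟨1, _⟩ => q

/-- A pair of elements of the graded family `G`, indexed over `v2 p q`. -/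
def f2 {G : ℕ → Type} {p q : ℕ} (a : G p) (b : G q) :
    ∀ i : Fin 2, G (v2 p q i)
  | ⟨0, _⟩ => a
  | ⟨1, _⟩ => b

theorem sum_v2 (p q : ℕ) : (∑ i, v2 p q i) = p + q := by
  rw [Fin.sum_univ_two]; rfl

theorem partial_sum_eq {n : ℕ} (k : Fin n → ℕ) (i : Fin n) :
    (∑ j ∈ Finset.univ.filter (fun j => j < i), k j) + k i
      + (∑ j ∈ Finset.univ.filter (fun j => i < j), k j) = ∑ j, k j := by
  classical
  have h2 : Finset.univ.filter (fun j => ¬ j < i)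
      = insert i (Finset.univ.filter (fun j => i < j)) := by
    ext j
    simp [not_lt, le_iff_lt_or_eq, or_comm, eq_comm]
  rw [← Finset.sum_filter_add_sum_filter_not Finset.univ (fun j => j < i) k, h2,
    Finset.sum_insert (by simp)]
  omega

set_option linter.unusedSectionVars false
section Aux

variable (G : ℕ → Type) [∀ n, Group (G n)]

theorem gcast_refl {n : ℕ} (h : n = n) (x : G n) : gcast G h x = x := rfl

theorem gcast_gcast {a b c : ℕ} (h1 : a = b) (h2 : b = c) (x : G a) :
    gcast G h2 (gcast G h1 x) = gcast G (h1.trans h2) x := by subst h1; subst h2; rfl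

theorem gcast_mul {a b : ℕ} (h : a = b) (x y : G a) :
    gcast G h (x * y) = gcast G h x * gcast G h y := by subst h; rfl

theorem gcast_one {a b : ℕ} (h : a = b) : gcast G h (1 : G a) = (1 : G b) := by subst h; rfl

theorem gcast_eq_one {a b : ℕ} (h : a = b) (x : G a) : gcast G h x = 1 ↔ x = 1 := by
  subst h; exact Iff.rfl

theorem gcast_eq_iff {a b : ℕ} (h : a = b) (x : G a) (y : G b) :
    gcast G h x = y ↔ x = gcast G h.symm y := by subst h; exact Iff.rfl

variable (𝒢 : GroupOperad G)

theorem interchange_one {n : ℕ} {kk : Fin n → ℕ} (x y : G n) (xs ys : ∀ i, G (kk i))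
    (h : 𝒢.π y = 1) :
    𝒢.γ (x * y) (fun i => xs i * ys i) = 𝒢.γ x xs * 𝒢.γ y ys := by
  rw [𝒢.interchange]
  congr 1
  revert h
  generalize 𝒢.π y = σ
  intro h
  subst h
  rfl

end Aux
section Aux2
set_option linter.unusedSectionVars false
variable (G : ℕ → Type) [∀ n, Group (G n)] (𝒢 : GroupOperad G)

theorem gamma_one_mul {n : ℕ} {kk : Fin n → ℕ} (xs ys : ∀ i, G (kk i)) :
    𝒢.γ (1 : G n) (fun i => xs i * ys i) = 𝒢.γ 1 xs * 𝒢.γ 1 ys := by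
  have h := interchange_one G 𝒢 (1 : G n) 1 xs ys (map_one 𝒢.π)
  rwa [one_mul] at h

theorem gamma_one_one {n : ℕ} {kk : Fin n → ℕ} :
    𝒢.γ (1 : G n) (fun i => (1 : G (kk i))) = 1 := by
  have h := gamma_one_mul G 𝒢 (fun i => (1 : G (kk i))) (fun i => (1 : G (kk i)))
  simp only [mul_one] at h
  exact left_eq_mul.mp h

theorem mu_mul {t : ℕ} (u v : G 1) (x y : G t) :
    𝒢.γ (k := fun _ : Fin 1 => t) (u * v) (fun _ => x * y)
      = 𝒢.γ u (fun _ => x) * 𝒢.γ v (fun _ => y) :=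
  𝒢.interchange u v (fun _ => x) (fun _ => y)

theorem e_eq_one : 𝒢.e = 1 := by
  have h1 := 𝒢.γ_id (x := (1 : G 1))
  have h2 := 𝒢.id_γ (x := (1 : G 1))
  rw [gcast_eq_iff] at h1 h2
  rw [gcast_one] at h1 h2
  have hm := mu_mul G 𝒢 𝒢.e 1 (1 : G 1) 𝒢.e
  simp only [mul_one, one_mul] at hm
  rw [h1, h2, one_mul] at hm
  have h3 := 𝒢.γ_id (x := 𝒢.e)
  rw [gcast_eq_iff] at h3
  exact ((gcast_eq_one G _ 𝒢.e).mp (hm.symm.trans h3).symm)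

theorem gamma_cast_congr {n : ℕ} {k₁ k₂ : Fin n → ℕ} (h : ∀ i, k₁ i = k₂ i)
    (H : (∑ i, k₁ i) = ∑ i, k₂ i) (x : G n) (xs : ∀ i, G (k₁ i)) :
    𝒢.γ (k := k₂) x (fun i => gcast G (h i) (xs i)) = gcast G H (𝒢.γ x xs) := by
  have hk : k₁ = k₂ := funext h
  subst hk
  rfl

theorem gamma_outer_cast {m n : ℕ} (h : m = n) (x : G m) (kf : Fin n → ℕ)
    (xs : ∀ i, G (kf i)) (H : (∑ i, kf (Fin.cast h i)) = ∑ i, kf i) :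
    𝒢.γ (gcast G h x) xs
      = gcast G H (𝒢.γ (k := fun i => kf (Fin.cast h i)) x (fun i => xs (Fin.cast h i))) := by
  subst h
  rfl

end Aux2
section Aux3
set_option linter.unusedSectionVars false
variable (G : ℕ → Type) [∀ n, Group (G n)] (𝒢 : GroupOperad G)

/-- arity vector for the first associativity step -/
def lD (p q k : ℕ) : ∀ i : Fin 3, Fin (v3 p k q i) → ℕ :=
  f3 (G := fun t => Fin t → ℕ) (fun _ => 0) (fun _ => 1) (fun _ => 0)

def ysD (p q k : ℕ) : ∀ (i : Fin 3) (s : Fin (v3 p k q i)), G (lD p q k i s) :=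
  fun i => match i with
  | ⟨0, _⟩ => fun _ => (1 : G 0)
  | ⟨1, _⟩ => fun _ => 𝒢.e
  | ⟨2, _⟩ => fun _ => (1 : G 0)

/-- arity vector for the second associativity step -/
def lDD (k : ℕ) : ∀ i : Fin 3, Fin (v3 0 1 0 i) → ℕ :=
  f3 (G := fun t => Fin t → ℕ) (fun _ => 0) (fun _ => k) (fun _ => 0)

def ysDD {k : ℕ} (b : G k) : ∀ (i : Fin 3) (s : Fin (v3 0 1 0 i)), G (lDD k i s) :=
  fun i => match i with
  | ⟨0, _⟩ => fun _ => (1 : G 0)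
  | ⟨1, _⟩ => fun _ => b
  | ⟨2, _⟩ => fun _ => (1 : G 0)

theorem lpp (k : ℕ) : ∀ z : (Σ i : Fin 3, Fin (v3 0 1 0 i)), k = lDD k z.1 z.2 := by
  rintro ⟨⟨i, hi⟩, s⟩
  interval_cases i
  · exact s.elim0
  · rfl
  · exact s.elim0

theorem ypp {k : ℕ} (b : G k) :
    ∀ z : (Σ i : Fin 3, Fin (v3 0 1 0 i)), ysDD G b z.1 z.2 = gcast G (lpp k z) b := by
  rintro ⟨⟨i, hi⟩, s⟩
  interval_cases i
  · exact s.elim0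
  · rfl
  · exact s.elim0

theorem hki3 (p q k : ℕ) :
    ∀ i : Fin 3, (∑ s : Fin (v3 0 1 0 i), lDD k i s) = ∑ s : Fin (v3 p k q i), lD p q k i s := by
  rintro ⟨i, hi⟩
  interval_cases i
  · show (∑ _s : Fin 0, (0:ℕ)) = ∑ _s : Fin p, 0
    simp
  · show (∑ _s : Fin 1, k) = ∑ _s : Fin k, 1
    simp
  · show (∑ _s : Fin 0, (0:ℕ)) = ∑ _s : Fin q, 0
    simp

end Aux3
section Aux4
set_option linter.unusedSectionVars false
variable (G : ℕ → Type) [∀ n, Group (G n)] (𝒢 : GroupOperad G)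

theorem match3 (p q k : ℕ) (b : G k) :
    (fun i => 𝒢.γ (f3 (1 : G p) b (1 : G q) i) (ysD G 𝒢 p q k i))
      = fun i => gcast G (hki3 p q k i) (𝒢.γ (f3 (1 : G 0) 𝒢.e (1 : G 0) i) (ysDD G b i)) := by
  funext i
  rcases i with ⟨i, hi⟩
  interval_cases i
  · show 𝒢.γ (k := fun _ : Fin p => 0) (1 : G p) (fun _ => (1 : G 0))
        = gcast G (hki3 p q k ⟨0, by omega⟩)
            (𝒢.γ (k := fun _ : Fin 0 => 0) (1 : G 0) (fun _ => (1 : G 0)))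
    rw [gamma_one_one, gamma_one_one]; exact (gcast_one G _).symm
  · show 𝒢.γ (k := fun _ : Fin k => 1) b (fun _ => 𝒢.e)
        = gcast G (hki3 p q k ⟨1, by omega⟩)
            (𝒢.γ (k := fun _ : Fin 1 => k) 𝒢.e (fun _ => b))
    have h1 := 𝒢.id_γ (x := b)
    have h2 := 𝒢.γ_id (x := b)
    rw [gcast_eq_iff] at h1 h2
    rw [h1, h2]; exact (gcast_gcast G _ _ b).symm
  · show 𝒢.γ (k := fun _ : Fin q => 0) (1 : G q) (fun _ => (1 : G 0))
        = gcast G (hki3 p q k ⟨2, by omega⟩)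
            (𝒢.γ (k := fun _ : Fin 0 => 0) (1 : G 0) (fun _ => (1 : G 0)))
    rw [gamma_one_one, gamma_one_one]; exact (gcast_one G _).symm

theorem hM1 : (∑ i, v3 0 1 0 i) = 1 := by rw [sum_v3]

theorem PRF2 (p q k : ℕ) :
    (∑ i, ∑ s : Fin (v3 p k q i), lD p q k i s) = ∑ _i : Fin 1, k := by
  rw [Fin.sum_univ_three]
  show (∑ _s : Fin p, 0) + (∑ _s : Fin k, 1) + (∑ _s : Fin q, 0) = ∑ _i : Fin 1, k
  simp

end Aux4
section Aux5
set_option linter.unusedSectionVars false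
set_option maxHeartbeats 1000000
variable (G : ℕ → Type) [∀ n, Group (G n)] (𝒢 : GroupOperad G)

theorem pipeline (p q k : ℕ) (b : G k)
    (hb : 𝒢.γ (1 : G 3) (f3 (1 : G p) b (1 : G q)) = 1) :
    𝒢.γ (k := fun _ : Fin 1 => k)
        (gcast G hM1 (𝒢.γ (1 : G 3) (f3 (1 : G 0) 𝒢.e (1 : G 0)))) (fun _ => b)
      = gcast G (PRF2 p q k)
          (gcast G (flatten_sum_eq (v3 p k q) (lD p q k))
            (𝒢.γ (1 : G (∑ i, v3 p k q i))
              (fun j => ysD G 𝒢 p q k (finSigmaFinEquivFlat.symm j).1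
                (finSigmaFinEquivFlat.symm j).2))) := by
  have A1 := 𝒢.γ_assoc (x := (1 : G 3)) (xs := f3 (1 : G p) b (1 : G q))
    (ys := ysD G 𝒢 p q k)
  rw [hb] at A1
  have HS : (∑ i, ∑ s : Fin (v3 0 1 0 i), lDD k i s)
      = ∑ i, ∑ s : Fin (v3 p k q i), lD p q k i s :=
    Finset.sum_congr rfl (fun i _ => hki3 p q k i)
  have A2 := gamma_cast_congr G 𝒢 (hki3 p q k) HS (1 : G 3)
      (fun i => 𝒢.γ (f3 (1 : G 0) 𝒢.e (1 : G 0) i) (ysDD G b i))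
  have A3 := 𝒢.γ_assoc (x := (1 : G 3)) (xs := f3 (1 : G 0) 𝒢.e (1 : G 0))
    (ys := ysDD G b)
  have hE : 𝒢.γ (1 : G 3) (f3 (1 : G 0) 𝒢.e (1 : G 0))
      = gcast G hM1.symm (gcast G hM1 (𝒢.γ (1 : G 3) (f3 (1 : G 0) 𝒢.e (1 : G 0)))) := by
    rw [gcast_gcast]; exact (gcast_refl G _ _).symm
  have Hout : (∑ i : Fin 1,
        lDD k (finSigmaFinEquivFlat.symm (Fin.cast hM1.symm i)).1
          (finSigmaFinEquivFlat.symm (Fin.cast hM1.symm i)).2)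
      = ∑ j : Fin (∑ i, v3 0 1 0 i),
          lDD k (finSigmaFinEquivFlat.symm j).1 (finSigmaFinEquivFlat.symm j).2 :=
    Fintype.sum_equiv (finCongr hM1.symm) _ _ (fun i => rfl)
  have A4 := gamma_outer_cast G 𝒢 hM1.symm
      (gcast G hM1 (𝒢.γ (1 : G 3) (f3 (1 : G 0) 𝒢.e (1 : G 0))))
      (fun j => lDD k (finSigmaFinEquivFlat.symm j).1 (finSigmaFinEquivFlat.symm j).2)
      (fun j => ysDD G b (finSigmaFinEquivFlat.symm j).1 (finSigmaFinEquivFlat.symm j).2)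
      Hout
  have hfam : (fun i : Fin 1 =>
        ysDD G b (finSigmaFinEquivFlat.symm (Fin.cast hM1.symm i)).1
          (finSigmaFinEquivFlat.symm (Fin.cast hM1.symm i)).2)
      = fun i : Fin 1 =>
          gcast G (lpp k (finSigmaFinEquivFlat.symm (Fin.cast hM1.symm i))) b :=
    funext fun i => ypp G b _
  have Hfam : (∑ _i : Fin 1, k)
      = ∑ i : Fin 1,
          lDD k (finSigmaFinEquivFlat.symm (Fin.cast hM1.symm i)).1
            (finSigmaFinEquivFlat.symm (Fin.cast hM1.symm i)).2 :=
    Finset.sum_congr rfl (fun i _ => lpp k _)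
  have A6 := gamma_cast_congr G 𝒢
      (k₁ := fun _ : Fin 1 => k)
      (k₂ := fun i : Fin 1 =>
        lDD k (finSigmaFinEquivFlat.symm (Fin.cast hM1.symm i)).1
          (finSigmaFinEquivFlat.symm (Fin.cast hM1.symm i)).2)
      (fun i => lpp k _) Hfam
      (gcast G hM1 (𝒢.γ (1 : G 3) (f3 (1 : G 0) 𝒢.e (1 : G 0))))
      (fun _ => b)
  have main := A1.trans
    ((congrArg
        (fun f => 𝒢.γ (k := fun i => ∑ s : Fin (v3 p k q i), lD p q k i s) (1 : G 3) f)
        (match3 G 𝒢 p q k b)).trans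
      (A2.trans
        ((congrArg (fun z => gcast G HS z) A3.symm).trans
          ((congrArg
              (fun z => gcast G HS (gcast G (flatten_sum_eq (v3 0 1 0) (lDD k))
                (𝒢.γ z (fun j => ysDD G b (finSigmaFinEquivFlat.symm j).1
                  (finSigmaFinEquivFlat.symm j).2)))) hE).trans
            ((congrArg
                (fun z => gcast G HS (gcast G (flatten_sum_eq (v3 0 1 0) (lDD k)) z))
                A4).trans
              ((congrArg
                  (fun f => gcast G HS (gcast G (flatten_sum_eq (v3 0 1 0) (lDD k))
                    (gcast G Hout
                      (𝒢.γ (gcast G hM1 (𝒢.γ (1 : G 3) (f3 (1 : G 0) 𝒢.e (1 : G 0)))) f))))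
                  hfam).trans
                (congrArg
                  (fun z => gcast G HS (gcast G (flatten_sum_eq (v3 0 1 0) (lDD k))
                    (gcast G Hout z)))
                  A6)))))))
  -- main : gcast FL (γ 1M flat) = gcast HS (gcast FL2 (gcast Hout (gcast Hfam (γ E'' (fun _ => b)))))
  rw [main, gcast_gcast, gcast_gcast, gcast_gcast, gcast_gcast]
  exact (gcast_refl G _ _).symm

end Aux5
section Aux6
set_option linter.unusedSectionVars false
set_option maxHeartbeats 1000000
variable (G : ℕ → Type) [∀ n, Group (G n)] (𝒢 : GroupOperad G)

theorem kernel_trivial (p q k : ℕ) (a : G k)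
    (ha : 𝒢.γ (1 : G 3) (f3 (1 : G p) a (1 : G q)) = 1) : a = 1 := by
  have h1 : 𝒢.γ (1 : G 3) (f3 (1 : G p) (1 : G k) (1 : G q)) = 1 := by
    have hf : f3 (1 : G p) (1 : G k) (1 : G q) = fun i => (1 : G (v3 p k q i)) := by
      funext i; rcases i with ⟨i, hi⟩; interval_cases i <;> rfl
    rw [hf]; exact gamma_one_one G 𝒢
  have Ra := pipeline G 𝒢 p q k a ha
  have R1 := pipeline G 𝒢 p q k 1 h1
  have hEab : 𝒢.γ (k := fun _ : Fin 1 => k)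
      (gcast G hM1 (𝒢.γ (1 : G 3) (f3 (1 : G 0) 𝒢.e (1 : G 0)))) (fun _ => a)
      = 𝒢.γ (gcast G hM1 (𝒢.γ (1 : G 3) (f3 (1 : G 0) 𝒢.e (1 : G 0))))
          (fun _ => (1 : G k)) := Ra.trans R1.symm
  have qa := mu_mul G 𝒢 (gcast G hM1 (𝒢.γ (1 : G 3) (f3 (1 : G 0) 𝒢.e (1 : G 0))))⁻¹
      (gcast G hM1 (𝒢.γ (1 : G 3) (f3 (1 : G 0) 𝒢.e (1 : G 0)))) (1 : G k) a
  have q1 := mu_mul G 𝒢 (gcast G hM1 (𝒢.γ (1 : G 3) (f3 (1 : G 0) 𝒢.e (1 : G 0))))⁻¹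
      (gcast G hM1 (𝒢.γ (1 : G 3) (f3 (1 : G 0) 𝒢.e (1 : G 0)))) (1 : G k) 1
  simp only [inv_mul_cancel, one_mul] at qa q1
  rw [hEab] at qa
  have key : 𝒢.γ (k := fun _ : Fin 1 => k) (1 : G 1) (fun _ => a)
      = 𝒢.γ (1 : G 1) (fun _ => (1 : G k)) := qa.trans q1.symm
  rw [← e_eq_one G 𝒢] at key
  have ga := 𝒢.γ_id (x := a)
  have g1 := 𝒢.γ_id (x := (1 : G k))
  have key2 := congrArg
    (fun z => gcast G (show (∑ _i : Fin 1, k) = k by simp) z) key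
  exact ga.symm.trans (key2.trans g1)

end Aux6
/-- In any group operad, the map `G k → G (p + k + q)`,
`x ↦ γ(e₃; e_p, x, e_q)`, is an injective group homomorphism. -/
theorem groupOperad_pad_injective_hom (G : ℕ → Type) [∀ n, Group (G n)]
    (𝒢 : GroupOperad G) (p q k : ℕ) :
    Function.Injective (fun x : G k =>
      gcast G (sum_v3 p k q) (𝒢.γ (1 : G 3) (f3 (1 : G p) x (1 : G q))))
    ∧ ∀ x y : G k,
        gcast G (sum_v3 p k q) (𝒢.γ (1 : G 3) (f3 (1 : G p) (x * y) (1 : G q)))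
          = gcast G (sum_v3 p k q) (𝒢.γ (1 : G 3) (f3 (1 : G p) x (1 : G q)))
            * gcast G (sum_v3 p k q) (𝒢.γ (1 : G 3) (f3 (1 : G p) y (1 : G q))) := by
  have hmul : ∀ x y : G k,
      gcast G (sum_v3 p k q) (𝒢.γ (1 : G 3) (f3 (1 : G p) (x * y) (1 : G q)))
        = gcast G (sum_v3 p k q) (𝒢.γ (1 : G 3) (f3 (1 : G p) x (1 : G q)))
          * gcast G (sum_v3 p k q) (𝒢.γ (1 : G 3) (f3 (1 : G p) y (1 : G q))) := by
    intro x y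
    have hf : f3 (1 : G p) (x * y) (1 : G q)
        = fun i => f3 (1 : G p) x (1 : G q) i * f3 (1 : G p) y (1 : G q) i := by
      funext i; rcases i with ⟨i, hi⟩; interval_cases i
      · show (1 : G p) = 1 * 1; rw [one_mul]
      · rfl
      · show (1 : G q) = 1 * 1; rw [one_mul]
    rw [hf, gamma_one_mul G 𝒢, gcast_mul]
  refine ⟨?_, hmul⟩
  exact (injective_iff_map_eq_one
    (MonoidHom.mk' (fun x : G k =>
      gcast G (sum_v3 p k q) (𝒢.γ (1 : G 3) (f3 (1 : G p) x (1 : G q)))) hmul)).mpr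
    (fun a ha => kernel_trivial G 𝒢 p q k a
      ((gcast_eq_one G (sum_v3 p k q) _).mp ha))
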